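/- arXiv:2604.11227 — 2 statements merged into one kernel-verified Lean document; each statement's English description precedes it below -/
import Mathlib

section
/- Let ρ_ℓ and ρ_u be square-integrable real random variables with means r_ℓ, r_u and second moments ν_ℓ, ν_u, and suppose ρ_ℓ and ρ_u are independent with r_ℓ > r_u. If (r_ℓ - r_u)² ≥ ((1-ε)/ε)·(ν_ℓ + ν_u - r_ℓ² - r_u²) for some 0 < ε < 1, then Pr[ρ_ℓ - ρ_u ≤ 0] ≤ ε. -/
/-!
The difference `ρℓ - ρu` has mean `rℓ - ru > 0` and, by independence, variance
`σ² = (νℓ - rℓ²) + (νu - ru²)`. Cantelli's inequality bounds `Pr[ρℓ - ρu ≤ 0]` by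
`σ² / (σ² + (rℓ - ru)²)`, and the hypothesis, multiplied out by `ε`, says exactly that this is
at most `ε`.
-/

open MeasureTheory ProbabilityTheory

namespace ProbabilityTheory

variable {Ω : Type*} [MeasurableSpace Ω] {μ : Measure Ω} [IsProbabilityMeasure μ] {X : Ω → ℝ}

lemma integral_const_sub_sq (hX : MemLp X 2 μ) (c : ℝ) :
    ∫ ω, (c - X ω) ^ 2 ∂μ = Var[X; μ] + (c - μ[X]) ^ 2 := by
  have hZ : MemLp (fun ω ↦ c - X ω) 2 μ := (memLp_const c).sub hX
  have h := variance_eq_sub hZ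
  rw [variance_const_sub hX.aestronglyMeasurable,
    integral_sub (integrable_const c) (hX.integrable one_le_two)] at h
  simp only [Pi.pow_apply, integral_const, probReal_univ, one_smul] at h
  linarith

/-- **Cantelli's inequality** (one-sided Chebyshev). -/
theorem measureReal_sub_integral_le_neg_le (hX : MemLp X 2 μ) {t : ℝ} (ht : 0 < t) :
    μ.real {ω | X ω - μ[X] ≤ -t} ≤ Var[X; μ] / (Var[X; μ] + t ^ 2) := by
  set σ2 := Var[X; μ]
  have hσ2 : 0 ≤ σ2 := variance_nonneg X μ
  -- Markov's inequality for `(u + μ[X] - X)²`, with the shift `u = σ²/t` that optimises the bound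
  set u := σ2 / t
  have hu : 0 ≤ u := by positivity
  have hsub : {ω | X ω - μ[X] ≤ -t} ⊆ {ω | (u + t) ^ 2 ≤ (u + μ[X] - X ω) ^ 2} := by
    intro ω hω
    rw [Set.mem_ofPred_eq] at hω ⊢
    exact pow_le_pow_left₀ (by positivity) (by linarith) 2
  have hZ : MemLp (fun ω ↦ u + μ[X] - X ω) 2 μ := (memLp_const _).sub hX
  have hmarkov := mul_meas_ge_le_integral_of_nonneg (.of_forall fun ω ↦ sq_nonneg _)
    hZ.integrable_sq ((u + t) ^ 2)
  rw [integral_const_sub_sq hX, add_sub_cancel_right] at hmarkov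
  calc μ.real {ω | X ω - μ[X] ≤ -t}
      ≤ μ.real {ω | (u + t) ^ 2 ≤ (u + μ[X] - X ω) ^ 2} := measureReal_mono hsub
    _ ≤ (σ2 + u ^ 2) / (u + t) ^ 2 := by rw [le_div_iff₀ (by positivity)]; linarith
    _ = σ2 / (σ2 + t ^ 2) := by
      have : σ2 + t ^ 2 ≠ 0 := by positivity
      simp only [u]; field_simp; ring

theorem measure_nonpos_le_variance_div (hX : MemLp X 2 μ) (hpos : 0 < μ[X]) :
    μ {ω | X ω ≤ 0} ≤ ENNReal.ofReal (Var[X; μ] / (Var[X; μ] + μ[X] ^ 2)) := by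
  rw [← ofReal_measureReal]
  refine ENNReal.ofReal_le_ofReal ?_
  convert measureReal_sub_integral_le_neg_le hX hpos using 3
  simp

end ProbabilityTheory

theorem epsilon_separation_sufficient_general {Ω : Type*} [MeasurableSpace Ω] (P : Measure Ω)
    [IsProbabilityMeasure P] (ρℓ ρu : Ω → ℝ)
    (hρℓ : MemLp ρℓ 2 P) (hρu : MemLp ρu 2 P)
    (hind : IndepFun ρℓ ρu P)
    (rℓ ru νℓ νu ε : ℝ)
    (hrℓ : (∫ ω, ρℓ ω ∂P) = rℓ) (hru : (∫ ω, ρu ω ∂P) = ru)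
    (hνℓ : (∫ ω, (ρℓ ω) ^ 2 ∂P) = νℓ) (hνu : (∫ ω, (ρu ω) ^ 2 ∂P) = νu)
    (horder : ru < rℓ) (hε0 : 0 < ε)
    (hcond : (rℓ - ru) ^ 2 ≥ ((1 - ε) / ε) * (νℓ + νu - rℓ ^ 2 - ru ^ 2)) :
    P {ω | ρℓ ω - ρu ω ≤ 0} ≤ ENNReal.ofReal ε := by
  have hmean : P[ρℓ - ρu] = rℓ - ru := by
    rw [integral_sub' (hρℓ.integrable one_le_two) (hρu.integrable one_le_two), hrℓ, hru]
  have hvar : Var[ρℓ - ρu; P] = (νℓ - rℓ ^ 2) + (νu - ru ^ 2) := by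
    rw [variance_sub hρℓ hρu, hind.covariance_eq_zero hρℓ hρu, variance_eq_sub hρℓ,
      variance_eq_sub hρu]
    simp only [Pi.pow_apply, hrℓ, hru, hνℓ, hνu]
    ring
  have hgap : 0 < rℓ - ru := sub_pos.2 horder
  calc P {ω | ρℓ ω - ρu ω ≤ 0}
      ≤ ENNReal.ofReal (Var[ρℓ - ρu; P] / (Var[ρℓ - ρu; P] + P[ρℓ - ρu] ^ 2)) :=
        measure_nonpos_le_variance_div (hρℓ.sub hρu) (hmean ▸ hgap)
    _ ≤ ENNReal.ofReal ε := by
      refine ENNReal.ofReal_le_ofReal ?_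
      rw [hmean, div_le_iff₀ (by have := variance_nonneg (ρℓ - ρu) P; positivity), hvar]
      have := mul_le_mul_of_nonneg_left hcond hε0.le
      rw [← mul_assoc, mul_div_cancel₀ _ hε0.ne'] at this
      linarith

/-- Proposition 1 (sufficient condition for ε-separation): for independent square-integrable
ρℓ, ρu with means rℓ > ru and second moments νℓ, νu, if
(rℓ - ru)² ≥ ((1-ε)/ε)(νℓ + νu - rℓ² - ru²) for some 0 < ε < 1, then Pr[ρℓ - ρu ≤ 0] ≤ ε. -/
theorem epsilon_separation_sufficient {Ω : Type*} [MeasurableSpace Ω] (P : Measure Ω)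
    [IsProbabilityMeasure P] (ρℓ ρu : Ω → ℝ)
    (hρℓ : MemLp ρℓ 2 P) (hρu : MemLp ρu 2 P)
    (hind : IndepFun ρℓ ρu P)
    (rℓ ru νℓ νu ε : ℝ)
    (hrℓ : (∫ ω, ρℓ ω ∂P) = rℓ) (hru : (∫ ω, ρu ω ∂P) = ru)
    (hνℓ : (∫ ω, (ρℓ ω) ^ 2 ∂P) = νℓ) (hνu : (∫ ω, (ρu ω) ^ 2 ∂P) = νu)
    (horder : ru < rℓ) (hε0 : 0 < ε) (hε1 : ε < 1)
    (hcond : (rℓ - ru) ^ 2 ≥ ((1 - ε) / ε) * (νℓ + νu - rℓ ^ 2 - ru ^ 2)) :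
    P {ω | ρℓ ω - ρu ω ≤ 0} ≤ ENNReal.ofReal ε :=
  epsilon_separation_sufficient_general P ρℓ ρu hρℓ hρu hind rℓ ru νℓ νu ε hrℓ hru hνℓ hνu horder
    hε0 hcond
end

section
/- Let θ ~ N(μ, σ²) and φ ~ N(ξ, ς²) be independent Gaussian random variables, let a(θ,φ) = (sin θ cos φ, sin θ sin φ, cos θ), and let R(α,β,γ) be the Euler rotation. Then the expected first coordinate of Rᵀa equals cos β · sin(μ)e^{-σ²/2} · cos(ξ - α)e^{-ς²/2} − sin β · cos(μ)e^{-σ²/2}. -/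
/-!
The first coordinate of `Rᵀ a` is `cos β · sin θ · cos (φ - α) - sin β · cos θ`, independent
of `γ`. Under the product law the expectation of `sin θ · cos (φ - α)` factors, and each
Gaussian trigonometric moment is the real or imaginary part of the characteristic function
`E[e^{iθ}] = e^{iμ - σ²/2}`.
-/

open MeasureTheory ProbabilityTheory Real Matrix
open scoped NNReal

/-- Rotation by α about the Z-axis. -/
noncomputable def rotZ (α : ℝ) : Matrix (Fin 3) (Fin 3) ℝ :=
  !![Real.cos α, -Real.sin α, 0; Real.sin α, Real.cos α, 0; 0, 0, 1]

/-- Rotation by β about the Y-axis. -/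
noncomputable def rotY (β : ℝ) : Matrix (Fin 3) (Fin 3) ℝ :=
  !![Real.cos β, 0, Real.sin β; 0, 1, 0; -Real.sin β, 0, Real.cos β]

/-- Rotation by γ about the X-axis. -/
noncomputable def rotX (γ : ℝ) : Matrix (Fin 3) (Fin 3) ℝ :=
  !![1, 0, 0; 0, Real.cos γ, -Real.sin γ; 0, Real.sin γ, Real.cos γ]

/-- ZYX Euler rotation matrix R(α, β, γ). -/
noncomputable def eulerRot (α β γ : ℝ) : Matrix (Fin 3) (Fin 3) ℝ :=
  rotZ α * rotY β * rotX γ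

/-- Unit direction vector with elevation θ and azimuth φ. -/
noncomputable def sphDir (θ φ : ℝ) : Fin 3 → ℝ :=
  ![Real.sin θ * Real.cos φ, Real.sin θ * Real.sin φ, Real.cos θ]

namespace ProbabilityTheory

section Integrability

variable {Ω : Type*} [MeasurableSpace Ω] {ν : Measure Ω} [IsFiniteMeasure ν] {f : Ω → ℝ}

lemma integrable_cos_comp (hf : AEMeasurable f ν) : Integrable (fun x => Real.cos (f x)) ν :=
  .of_bound (by fun_prop) 1 (.of_forall fun x => by simpa using abs_cos_le_one (f x))

lemma integrable_sin_comp (hf : AEMeasurable f ν) : Integrable (fun x => Real.sin (f x)) ν :=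
  .of_bound (by fun_prop) 1 (.of_forall fun x => by simpa using abs_sin_le_one (f x))

lemma integrable_cexp_mul_I_comp (hf : AEMeasurable f ν) :
    Integrable (fun x => Complex.exp (f x * Complex.I)) ν :=
  .of_bound (by fun_prop) 1 (.of_forall fun x => by simp [Complex.norm_exp])

end Integrability

section CharFun

variable {ν : Measure ℝ} [IsFiniteMeasure ν]

lemma re_charFun (t : ℝ) : (charFun ν t).re = ∫ x, Real.cos (t * x) ∂ν := by
  have h := integral_re (integrable_cexp_mul_I_comp (ν := ν) (f := fun x => t * x) (by fun_prop))
  simp_rw [RCLike.re_to_complex, Complex.exp_ofReal_mul_I_re, Complex.ofReal_mul] at h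
  rw [h, charFun_apply_real]

lemma im_charFun (t : ℝ) : (charFun ν t).im = ∫ x, Real.sin (t * x) ∂ν := by
  have h := integral_im (integrable_cexp_mul_I_comp (ν := ν) (f := fun x => t * x) (by fun_prop))
  simp_rw [RCLike.im_to_complex, Complex.exp_ofReal_mul_I_im, Complex.ofReal_mul] at h
  rw [h, charFun_apply_real]

end CharFun

lemma charFun_gaussianReal_one (μ : ℝ) (v : ℝ≥0) :
    charFun (gaussianReal μ v) 1 = Real.exp (-v / 2) * Complex.exp (μ * Complex.I) := by
  rw [charFun_gaussianReal, Complex.ofReal_exp, ← Complex.exp_add]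
  push_cast
  ring_nf

lemma integral_cos_gaussianReal (μ : ℝ) (v : ℝ≥0) :
    ∫ x, Real.cos x ∂gaussianReal μ v = Real.cos μ * Real.exp (-v / 2) := by
  have h := congrArg Complex.re (charFun_gaussianReal_one μ v)
  rw [re_charFun, Complex.re_ofReal_mul, Complex.exp_ofReal_mul_I_re] at h
  simpa [mul_comm] using h

lemma integral_sin_gaussianReal (μ : ℝ) (v : ℝ≥0) :
    ∫ x, Real.sin x ∂gaussianReal μ v = Real.sin μ * Real.exp (-v / 2) := by
  have h := congrArg Complex.im (charFun_gaussianReal_one μ v)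
  rw [im_charFun, Complex.im_ofReal_mul, Complex.exp_ofReal_mul_I_im] at h
  simpa [mul_comm] using h

lemma integral_cos_sub_gaussianReal (μ α : ℝ) (v : ℝ≥0) :
    ∫ x, Real.cos (x - α) ∂gaussianReal μ v = Real.cos (μ - α) * Real.exp (-v / 2) := by
  simp_rw [Real.cos_sub]
  rw [integral_add ((integrable_cos_comp aemeasurable_id').mul_const _)
      ((integrable_sin_comp aemeasurable_id').mul_const _),
    integral_mul_const, integral_mul_const, integral_cos_gaussianReal, integral_sin_gaussianReal]
  ring

end ProbabilityTheory

lemma eulerRot_transpose_row_zero (α β γ : ℝ) :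
    (eulerRot α β γ)ᵀ 0 = ![Real.cos α * Real.cos β, Real.sin α * Real.cos β, -Real.sin β] := by
  ext j
  fin_cases j <;> simp [eulerRot, rotZ, rotY, rotX]

lemma eulerRot_transpose_mulVec_sphDir_zero (α β γ θ φ : ℝ) :
    ((eulerRot α β γ)ᵀ *ᵥ sphDir θ φ) 0
      = Real.cos β * (Real.sin θ * Real.cos (φ - α)) - Real.sin β * Real.cos θ := by
  change (eulerRot α β γ)ᵀ 0 ⬝ᵥ sphDir θ φ = _
  rw [eulerRot_transpose_row_zero, sphDir, Real.cos_sub]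
  simp only [cons_dotProduct_cons, dotProduct_of_isEmpty]
  ring

/-- For independent θ ~ N(μ, σ²), φ ~ N(ξ, ς²), the expected first coordinate of
Rᵀ(α,β,γ)·a(θ,φ) equals cos β · sin(μ)e^{-σ²/2} · cos(ξ-α)e^{-ς²/2}
− sin β · cos(μ)e^{-σ²/2}. -/
theorem expected_first_coordinate_rotated (μ ξ : ℝ) (σ ς : ℝ≥0) (α β γ : ℝ) :
    (∫ x, ((eulerRot α β γ)ᵀ.mulVec (sphDir x.1 x.2)) 0
        ∂((gaussianReal μ (σ ^ 2)).prod (gaussianReal ξ (ς ^ 2))))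
      = Real.cos β * (Real.sin μ * Real.exp (-(σ : ℝ) ^ 2 / 2))
          * (Real.cos (ξ - α) * Real.exp (-(ς : ℝ) ^ 2 / 2))
        - Real.sin β * (Real.cos μ * Real.exp (-(σ : ℝ) ^ 2 / 2)) := by
  have hsin_cos_sub :=
    (integrable_sin_comp (ν := gaussianReal μ (σ ^ 2)) aemeasurable_id').mul_prod
      (integrable_cos_comp (ν := gaussianReal ξ (ς ^ 2)) (f := (· - α)) (by fun_prop))
  have hcos := (integrable_cos_comp (ν := gaussianReal μ (σ ^ 2)) aemeasurable_id').comp_fst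
    (gaussianReal ξ (ς ^ 2))
  simp_rw [eulerRot_transpose_mulVec_sphDir_zero]
  rw [integral_sub (hsin_cos_sub.const_mul _) (hcos.const_mul _),
    integral_const_mul, integral_const_mul,
    integral_prod_mul Real.sin (fun φ => Real.cos (φ - α)), integral_fun_fst Real.cos,
    integral_sin_gaussianReal, integral_cos_gaussianReal, integral_cos_sub_gaussianReal,
    probReal_univ, one_smul]
  push_cast
  ring
end
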